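/- arXiv:1910.00807 — 2 statements merged into one kernel-verified Lean document; each statement's English description precedes it below -/
import Mathlib

section
/- The Hadamard finite-part integral f.p.∫_0^∞ x^{-3} e^{-x} dx equals 3/4 − γ/2. Equivalently, lim_{ε↓0} ( ∫_ε^∞ e^{-x}/x³ dx − 1/(2ε²) + 1/ε + (1/2) log ε ) = 3/4 − γ/2. -/
open Real MeasureTheory Filter Set Topology

/-!
Integrating by parts twice, `∫_ε^∞ e^{-x} / x³ dx = -Φ(ε) + ½ ∫_ε^∞ e^{-x} log x dx`, where
`Φ = expNegDivCubePrimitive` collects the boundary terms. As `ε ↓ 0` the last integral tends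
to `∫_0^∞ e^{-x} log x dx = Γ'(1) = -γ`, while expanding `e^{-ε}` to second order with an
`O(ε³)` remainder shows that `-Φ(ε) - 1/(2ε²) + 1/ε + ½ log ε → 3/4`.
-/

lemma abs_log_le_self_add_two_mul_rpow_neg_half {x : ℝ} (hx : 0 < x) :
    |log x| ≤ x + 2 * x ^ (-2⁻¹ : ℝ) := by
  have hr : 0 < x ^ (-2⁻¹ : ℝ) := rpow_pos_of_pos hx _
  rcases le_or_gt 1 x with h | h
  · rw [abs_of_nonneg (log_nonneg h)]
    linarith [log_le_sub_one_of_pos hx]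
  · have h1 := log_le_sub_one_of_pos hr
    rw [log_rpow hx, abs_of_nonpos (log_nonpos hx.le h.le)] at *
    linarith

lemma integrableOn_exp_neg_mul_log : IntegrableOn (fun x ↦ exp (-x) * log x) (Ioi 0) := by
  have hdom : IntegrableOn (fun x ↦ exp (-x) * x ^ ((2 : ℝ) - 1)
      + 2 * (exp (-x) * x ^ ((2⁻¹ : ℝ) - 1))) (Ioi 0) :=
    (GammaIntegral_convergent two_pos).add ((GammaIntegral_convergent (by norm_num)).const_mul 2)
  refine hdom.mono' ?_ ?_
  · exact ((continuous_exp.comp continuous_neg).continuousOn.mul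
      (continuousOn_log.mono fun x hx ↦ ne_of_gt hx)).aestronglyMeasurable measurableSet_Ioi
  · filter_upwards [ae_restrict_mem measurableSet_Ioi] with x (hx : 0 < x)
    have hlog := mul_le_mul_of_nonneg_left (abs_log_le_self_add_two_mul_rpow_neg_half hx)
      (exp_pos (-x)).le
    norm_num [abs_of_pos (exp_pos _)]
    linarith

lemma integral_exp_neg_mul_log :
    ∫ x in Ioi 0, exp (-x) * log x = -eulerMascheroniConstant := by
  have hGammaIntegral := Complex.hasDerivAt_GammaIntegral (s := 1) (by norm_num)
  have hGamma : Complex.GammaIntegral =ᶠ[𝓝 1] Complex.Gamma := by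
    filter_upwards [(isOpen_lt continuous_const Complex.continuous_re).mem_nhds
      (by norm_num : (0 : ℝ) < (1 : ℂ).re)] with s hs
    exact (Complex.Gamma_eq_integral hs).symm
  have hderiv := (hGammaIntegral.congr_of_eventuallyEq hGamma.symm).unique
    Complex.hasDerivAt_Gamma_one
  rw [sub_self] at hderiv
  simp only [Complex.cpow_zero, one_mul] at hderiv
  have hcast : ((∫ x in Ioi 0, exp (-x) * log x : ℝ) : ℂ) = -eulerMascheroniConstant := by
    rw [← hderiv, ← integral_complex_ofReal]
    simp_rw [Complex.ofReal_mul, mul_comm]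
  exact_mod_cast hcast

noncomputable def expNegDivCubePrimitive (x : ℝ) : ℝ :=
  exp (-x) * (log x + x⁻¹ - (x ^ 2)⁻¹) / 2

lemma hasDerivAt_expNegDivCubePrimitive {x : ℝ} (hx : 0 < x) :
    HasDerivAt expNegDivCubePrimitive (exp (-x) / x ^ 3 - exp (-x) * log x / 2) x := by
  have hx0 : x ≠ 0 := hx.ne'
  refine (((hasDerivAt_neg x).exp.mul (((hasDerivAt_log hx0).add (hasDerivAt_inv hx0)).sub
    ((hasDerivAt_pow 2 x).inv (pow_ne_zero 2 hx0)))).div_const 2).congr_deriv ?_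
  simp only [Pi.add_apply, Pi.sub_apply, Pi.inv_apply]
  field_simp
  ring

lemma tendsto_expNegDivCubePrimitive_atTop :
    Tendsto expNegDivCubePrimitive atTop (𝓝 0) := by
  have hlog : Tendsto (fun x ↦ x * exp (-x) * (log x / x)) atTop (𝓝 0) := by
    simpa using (tendsto_pow_mul_exp_neg_atTop_nhds_zero 1).mul
      isLittleO_log_id_atTop.tendsto_div_nhds_zero
  have hinv : Tendsto (fun x : ℝ ↦ x⁻¹ - (x ^ 2)⁻¹) atTop (𝓝 0) := by
    simpa using tendsto_inv_atTop_zero.sub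
      (tendsto_inv_atTop_zero.comp (tendsto_pow_atTop (α := ℝ) two_ne_zero))
  have h := (hlog.add (tendsto_exp_neg_atTop_nhds_zero.mul hinv)).div_const 2
  rw [zero_add, mul_zero, zero_div] at h
  refine h.congr' ?_
  filter_upwards [eventually_gt_atTop 0] with x hx
  rw [expNegDivCubePrimitive]
  field_simp
  ring

lemma integrableOn_exp_neg_div_pow {n : ℕ} (hn : n ≠ 0) {a : ℝ} (ha : 0 < a) :
    IntegrableOn (fun x ↦ exp (-x) / x ^ n) (Ioi a) := by
  refine integrable_of_isBigO_exp_neg one_pos ?_ ?_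
  · exact (continuous_exp.comp continuous_neg).continuousOn.div (continuous_pow n).continuousOn
      fun x hx ↦ pow_ne_zero n (ha.trans_le hx).ne'
  · simp_rw [neg_one_mul, div_eq_mul_inv]
    simpa using (Asymptotics.isBigO_refl (fun x ↦ exp (-x)) atTop).mul
      ((tendsto_inv_atTop_zero.comp (tendsto_pow_atTop (α := ℝ) hn)).isBigO_one ℝ)

lemma integral_exp_neg_div_cube {a : ℝ} (ha : 0 < a) :
    ∫ x in Ioi a, exp (-x) / x ^ 3
      = -expNegDivCubePrimitive a + (∫ x in Ioi a, exp (-x) * log x) / 2 := by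
  have hlog : IntegrableOn (fun x ↦ exp (-x) * log x) (Ioi a) :=
    integrableOn_exp_neg_mul_log.mono_set (Ioi_subset_Ioi ha.le)
  have hcube := integrableOn_exp_neg_div_pow three_ne_zero ha
  have hftc := integral_Ioi_of_hasDerivAt_of_tendsto'
    (fun x hx ↦ hasDerivAt_expNegDivCubePrimitive (ha.trans_le hx)) (hcube.sub (hlog.div_const 2))
    tendsto_expNegDivCubePrimitive_atTop
  rw [integral_sub hcube (hlog.div_const 2), integral_div] at hftc
  linarith

lemma abs_exp_neg_sub_quadratic_le {x : ℝ} (hx₀ : 0 ≤ x) (hx₁ : x ≤ 1) :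
    |exp (-x) - (1 - x + x ^ 2 / 2)| ≤ x ^ 3 := by
  have h := Real.exp_bound (x := -x) (by rwa [abs_neg, abs_of_nonneg hx₀]) (n := 3) (by norm_num)
  rw [Finset.sum_range_succ, Finset.sum_range_succ, Finset.sum_range_one] at h
  norm_num [Nat.factorial, abs_of_nonneg hx₀] at h
  rw [← sub_eq_add_neg] at h
  nlinarith [pow_nonneg hx₀ 3]

lemma tendsto_exp_neg_sub_one_div_add_two_sub_exp_neg_div :
    Tendsto (fun ε ↦ (exp (-ε) - 1) / (2 * ε ^ 2) + (2 - exp (-ε)) / (2 * ε))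
      (𝓝[>] 0) (𝓝 (3 / 4)) := by
  rw [← tendsto_sub_nhds_zero_iff]
  refine squeeze_zero_norm' ?_ (tendsto_nhdsWithin_of_tendsto_nhds tendsto_id)
  filter_upwards [Ioo_mem_nhdsGT one_pos] with ε ⟨hε₀, hε₁⟩
  have hr := abs_le.mp (abs_exp_neg_sub_quadratic_le hε₀.le hε₁.le)
  set r := exp (-ε) - (1 - ε + ε ^ 2 / 2)
  -- substitute `exp (-ε) = 1 - ε + ε ^ 2 / 2 + r`
  have hA : (exp (-ε) - 1) / (2 * ε ^ 2) + (2 - exp (-ε)) / (2 * ε) - 3 / 4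
      = (r * (1 - ε) - ε ^ 3 / 2) / (2 * ε ^ 2) := by
    simp only [r]
    field_simp
    ring
  have hden : 0 < 2 * ε ^ 2 := by positivity
  have hε₁' : 0 ≤ 1 - ε := by linarith
  rw [hA, Real.norm_eq_abs, abs_div, abs_of_pos hden, div_le_iff₀ hden, abs_le, id]
  constructor <;> nlinarith [pow_pos hε₀ 3, mul_le_mul_of_nonneg_right hr.1 hε₁',
    mul_le_mul_of_nonneg_right hr.2 hε₁']

lemma tendsto_one_sub_exp_neg_mul_log :
    Tendsto (fun ε ↦ (1 - exp (-ε)) * log ε) (𝓝[>] 0) (𝓝 0) := by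
  refine squeeze_zero_norm' ?_ (by simpa using (tendsto_log_mul_rpow_nhdsGT_zero one_pos).norm)
  filter_upwards [self_mem_nhdsWithin] with ε (hε : 0 < ε)
  have h₀ : 0 ≤ 1 - exp (-ε) := by linarith [exp_le_one_iff.mpr (neg_nonpos.mpr hε.le)]
  have h₁ : 1 - exp (-ε) ≤ ε := by linarith [add_one_le_exp (-ε)]
  rw [norm_mul, Real.norm_of_nonneg h₀, Real.norm_eq_abs, abs_of_pos hε, mul_comm]
  exact mul_le_mul_of_nonneg_left h₁ (abs_nonneg _)

theorem stmt_8 :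
    Tendsto (fun ε : ℝ =>
        (∫ x in Ioi ε, Real.exp (-x) / x ^ 3) - 1 / (2 * ε ^ 2) + 1 / ε
          + (1 / 2) * Real.log ε)
      (nhdsWithin 0 (Ioi 0)) (nhds (3 / 4 - Real.eulerMascheroniConstant / 2)) := by
  have hlog : Tendsto (fun ε ↦ ∫ x in Ioi ε, exp (-x) * log x) (𝓝[>] 0)
      (𝓝 (-eulerMascheroniConstant)) :=
    integral_exp_neg_mul_log ▸ (integrableOn_exp_neg_mul_log.continuousWithinAt_Ici_primitive_Ioi
      |>.mono Ioi_subset_Ici_self)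
  have h := (tendsto_exp_neg_sub_one_div_add_two_sub_exp_neg_div.add
    (tendsto_one_sub_exp_neg_mul_log.div_const 2)).add (hlog.div_const 2)
  rw [show 3 / 4 - eulerMascheroniConstant / 2 = 3 / 4 + 0 / 2 + -eulerMascheroniConstant / 2 by
    ring]
  refine h.congr' ?_
  filter_upwards [self_mem_nhdsWithin] with ε (hε : 0 < ε)
  rw [integral_exp_neg_div_cube hε, expNegDivCubePrimitive]
  field_simp
  ring
end

section
/- The Hadamard finite-part integral f.p.∫_0^∞ x^{-4} e^{-x} dx equals −11/36 + γ/6. -/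
/-!
Integrating by parts three times lowers `x⁻⁴` to `x⁻¹`, and once more turns
`∫_ε^∞ e^{-x} / x` into `-log ε · e^{-ε} + ∫_ε^∞ log x · e^{-x}`;
the last integral tends to `Γ'(1) = -γ`.
The boundary terms `e^{-ε} (2 - ε + ε²) / (6 ε³) + log ε · e^{-ε} / 6` cancel the subtracted
singular part up to `o(1)` and the constant `-11/36`, which is the `ε³`-coefficient of
`(2 - ε + ε²) e^{-ε} / 6`.
-/

open Real MeasureTheory Filter Set Finset

lemma integrableOn_exp_neg_div_pow_Ioi {ε : ℝ} (hε : 0 < ε) (n : ℕ) :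
    IntegrableOn (fun x => exp (-x) / x ^ n) (Ioi ε) := by
  refine Integrable.mono' ((integrableOn_exp_neg_Ioi ε).div_const (ε ^ n)) ?_ ?_
  · refine ContinuousOn.aestronglyMeasurable ?_ measurableSet_Ioi
    exact ContinuousOn.div (by fun_prop) (by fun_prop)
      fun x hx => pow_ne_zero _ (hε.trans hx).ne'
  · filter_upwards [ae_restrict_mem measurableSet_Ioi] with x (hx : ε < x)
    rw [norm_div, norm_of_nonneg (exp_pos _).le, norm_of_nonneg (pow_pos (hε.trans hx) n).le]
    gcongr

lemma abs_log_le_self_add_two_div_sqrt {x : ℝ} (hx : 0 < x) : |log x| ≤ x + 2 / √x := by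
  have hs : 0 < √x := sqrt_pos.2 hx
  have hupper : log x ≤ x - 1 := log_le_sub_one_of_pos hx
  -- `-log x = 2 log (1 / √x) ≤ 2 (1 / √x - 1)`
  have hlower : log (√x)⁻¹ ≤ (√x)⁻¹ - 1 := log_le_sub_one_of_pos (inv_pos.2 hs)
  rw [log_inv, log_sqrt hx.le] at hlower
  rw [abs_le, div_eq_mul_inv]
  constructor <;> nlinarith [inv_pos.2 hs]

lemma integrableOn_log_mul_exp_neg_Ioi :
    IntegrableOn (fun x => log x * exp (-x)) (Ioi 0) := by
  refine Integrable.mono' ((GammaIntegral_convergent two_pos).add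
    ((GammaIntegral_convergent one_half_pos).const_mul 2)) ?_ ?_
  · refine ContinuousOn.aestronglyMeasurable ?_ measurableSet_Ioi
    exact (continuousOn_log.mono fun x hx => ne_of_gt hx).mul (by fun_prop)
  · filter_upwards [ae_restrict_mem measurableSet_Ioi] with x (hx : 0 < x)
    have hhalf : x ^ ((1 / 2 : ℝ) - 1) = 1 / √x := by
      rw [show (1 / 2 : ℝ) - 1 = -(1 / 2) by norm_num, rpow_neg hx.le, sqrt_eq_rpow,
        inv_eq_one_div]
    rw [Pi.add_apply, norm_mul, norm_eq_abs, norm_of_nonneg (exp_pos _).le, hhalf,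
      show (2 : ℝ) - 1 = 1 by norm_num, rpow_one]
    calc |log x| * exp (-x) ≤ (x + 2 / √x) * exp (-x) := by
          gcongr; exact abs_log_le_self_add_two_div_sqrt hx
      _ = exp (-x) * x + 2 * (exp (-x) * (1 / √x)) := by ring

lemma integral_log_mul_exp_neg_Ioi :
    ∫ t in Ioi (0 : ℝ), log t * exp (-t) = -eulerMascheroniConstant := by
  have hGamma : Complex.Gamma =ᶠ[nhds 1] Complex.GammaIntegral := by
    filter_upwards [(isOpen_lt continuous_const Complex.continuous_re).mem_nhds
      (by norm_num : (0 : ℂ).re < (1 : ℂ).re)] with s hs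
    exact Complex.Gamma_eq_integral hs
  have hderiv := ((Complex.hasDerivAt_GammaIntegral (by norm_num)).congr_of_eventuallyEq
    hGamma).unique Complex.hasDerivAt_Gamma_one
  have hreal : ∫ t : ℝ in Ioi 0, (t : ℂ) ^ ((1 : ℂ) - 1) * (log t * exp (-t))
      = ((∫ t in Ioi (0 : ℝ), log t * exp (-t) : ℝ) : ℂ) := by
    refine (setIntegral_congr_fun measurableSet_Ioi fun t _ => ?_).trans integral_ofReal
    simp
  rw [hreal] at hderiv
  exact_mod_cast hderiv

lemma tendsto_setIntegral_Ioi_nhdsGT {E : Type*} [NormedAddCommGroup E] [NormedSpace ℝ E]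
    {f : ℝ → E} {a : ℝ} (hf : IntegrableOn f (Ioi a)) :
    Tendsto (fun ε => ∫ x in Ioi ε, f x) (nhdsWithin a (Ioi a))
      (nhds (∫ x in Ioi a, f x)) := by
  have hdom := tendsto_integral_filter_of_dominated_convergence (μ := volume.restrict (Ioi a))
    (F := fun ε => (Ioi ε).indicator f) (f := f) (l := nhdsWithin a (Ioi a)) (fun x => ‖f x‖)
    (Eventually.of_forall fun ε => hf.aestronglyMeasurable.indicator measurableSet_Ioi)
    (Eventually.of_forall fun ε => Eventually.of_forall fun x => norm_indicator_le_norm_self _ _)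
    hf.norm ?_
  · refine hdom.congr' ?_
    filter_upwards [self_mem_nhdsWithin] with ε (hε : a < ε)
    rw [integral_indicator measurableSet_Ioi, Measure.restrict_restrict measurableSet_Ioi,
      inter_eq_self_of_subset_left (Ioi_subset_Ioi hε.le)]
  · filter_upwards [ae_restrict_mem measurableSet_Ioi] with x (hx : a < x)
    refine tendsto_const_nhds.congr' ?_
    filter_upwards [eventually_nhdsWithin_of_eventually_nhds (gt_mem_nhds hx)] with ε hε
    exact (indicator_of_mem hε f).symm

lemma integral_exp_neg_div_pow_succ_succ_Ioi {ε : ℝ} (hε : 0 < ε) (n : ℕ) :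
    (n + 1) * ∫ x in Ioi ε, exp (-x) / x ^ (n + 2)
      = exp (-ε) / ε ^ (n + 1) - ∫ x in Ioi ε, exp (-x) / x ^ (n + 1) := by
  have hint := integrableOn_exp_neg_div_pow_Ioi hε
  have hFTC : ∫ x in Ioi ε, (exp (-x) / x ^ (n + 1) + (n + 1) * (exp (-x) / x ^ (n + 2)))
      = 0 - -exp (-ε) / ε ^ (n + 1) := by
    refine integral_Ioi_of_hasDerivAt_of_tendsto' (f := fun x => -exp (-x) / x ^ (n + 1))
      (f' := fun x => exp (-x) / x ^ (n + 1) + (n + 1) * (exp (-x) / x ^ (n + 2)))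
      (fun x (hx : ε ≤ x) => ?_) ((hint _).add ((hint _).const_mul _)) ?_
    · have hx0 : x ≠ 0 := (hε.trans_le hx).ne'
      refine (((hasDerivAt_neg x).exp.fun_neg).fun_div (hasDerivAt_pow (n + 1) x)
        (pow_ne_zero _ hx0)).congr_deriv ?_
      field_simp
      push_cast
      ring
    · simpa [neg_div] using (tendsto_exp_neg_atTop_nhds_zero.div_atTop
        (tendsto_pow_atTop (Nat.succ_ne_zero n))).neg
  rw [integral_add (hint _) ((hint _).const_mul _), integral_const_mul] at hFTC
  linear_combination hFTC

lemma integral_exp_neg_div_Ioi {ε : ℝ} (hε : 0 < ε) :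
    ∫ x in Ioi ε, exp (-x) / x
      = -(log ε * exp (-ε)) + ∫ x in Ioi ε, log x * exp (-x) := by
  have hint₁ : IntegrableOn (fun x => exp (-x) / x) (Ioi ε) := by
    simpa using integrableOn_exp_neg_div_pow_Ioi hε 1
  have hint₂ : IntegrableOn (fun x => log x * exp (-x)) (Ioi ε) :=
    integrableOn_log_mul_exp_neg_Ioi.mono_set (Ioi_subset_Ioi hε.le)
  have hFTC : ∫ x in Ioi ε, (exp (-x) / x - log x * exp (-x)) = 0 - log ε * exp (-ε) := by
    refine integral_Ioi_of_hasDerivAt_of_tendsto' (f := fun x => log x * exp (-x))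
      (f' := fun x => exp (-x) / x - log x * exp (-x))
      (fun x (hx : ε ≤ x) => ?_) (hint₁.sub hint₂) ?_
    · refine ((hasDerivAt_log (hε.trans_le hx).ne').fun_mul
        (hasDerivAt_neg x).exp).congr_deriv ?_
      ring
    · refine squeeze_zero_norm' ?_ (tendsto_pow_mul_exp_neg_atTop_nhds_zero 1)
      filter_upwards [eventually_ge_atTop 1] with x hx
      rw [norm_mul, norm_of_nonneg (log_nonneg hx), norm_of_nonneg (exp_pos _).le, pow_one]
      gcongr
      exact (log_le_sub_one_of_pos (by linarith)).trans (by linarith)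
  rw [integral_sub hint₁ hint₂] at hFTC
  linear_combination hFTC

lemma integral_exp_neg_div_pow_four_Ioi {ε : ℝ} (hε : 0 < ε) :
    ∫ x in Ioi ε, exp (-x) / x ^ 4
      = exp (-ε) * (2 - ε + ε ^ 2) / (6 * ε ^ 3) + log ε * exp (-ε) / 6
        - (∫ x in Ioi ε, log x * exp (-x)) / 6 := by
  have h₄ := integral_exp_neg_div_pow_succ_succ_Ioi hε 2
  have h₃ := integral_exp_neg_div_pow_succ_succ_Ioi hε 1
  have h₂ := integral_exp_neg_div_pow_succ_succ_Ioi hε 0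
  have h₁ := integral_exp_neg_div_Ioi hε
  norm_num at h₄ h₃ h₂
  rw [show ∫ x in Ioi ε, exp (-x) / x ^ 4
      = exp (-ε) / (3 * ε ^ 3) - exp (-ε) / (6 * ε ^ 2) + exp (-ε) / (6 * ε)
        + log ε * exp (-ε) / 6 - (∫ x in Ioi ε, log x * exp (-x)) / 6 by
    linear_combination h₄ / 3 - h₃ / 6 + h₂ / 6 - h₁ / 6]
  field_simp
  ring

lemma tendsto_exp_sub_sum_div_pow_nhdsNE_zero (n : ℕ) :
    Tendsto (fun x => (exp x - ∑ m ∈ range (n + 1), x ^ m / m.factorial) / x ^ n)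
      (nhdsWithin 0 {0}ᶜ) (nhds 0) := by
  have hx : Tendsto (fun x : ℝ => |x|) (nhdsWithin 0 {0}ᶜ) (nhds 0) := by
    simpa using (continuous_abs.tendsto (0 : ℝ)).mono_left nhdsWithin_le_nhds
  refine squeeze_zero_norm' ?_
    (by simpa using hx.mul_const (((n : ℝ) + 2) / ((n + 1).factorial * (n + 1))))
  filter_upwards [self_mem_nhdsWithin, eventually_nhdsWithin_of_eventually_nhds
    ((continuous_abs.tendsto 0).eventually (eventually_le_nhds (by simp : |(0 : ℝ)| < 1)))]
    with x (hx0 : x ≠ 0) (hx1 : |x| ≤ 1)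
  simp only [norm_div, norm_pow, Real.norm_eq_abs]
  rw [div_le_iff₀ (by positivity)]
  refine (exp_bound hx1 (n := n + 1) n.succ_pos).trans_eq ?_
  push_cast
  ring

lemma tendsto_log_mul_exp_neg_sub_one_nhdsGT_zero :
    Tendsto (fun ε => log ε * (exp (-ε) - 1)) (nhdsWithin 0 (Ioi 0)) (nhds 0) := by
  refine squeeze_zero_norm' ?_ (by simpa using (tendsto_log_mul_rpow_nhdsGT_zero one_pos).abs)
  filter_upwards [self_mem_nhdsWithin] with ε (hε : 0 < ε)
  have hexp : |exp (-ε) - 1| ≤ ε := by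
    rw [abs_le]
    constructor
    · linarith [add_one_le_exp (-ε)]
    · linarith [exp_le_one_iff.mpr (neg_nonpos.mpr hε.le)]
  simp only [norm_mul, Real.norm_eq_abs, abs_of_pos hε]
  gcongr

lemma tendsto_exp_neg_mul_div_sub_sum_nhdsGT_zero :
    Tendsto (fun ε : ℝ => exp (-ε) * (2 - ε + ε ^ 2) / (6 * ε ^ 3)
        - ∑ k ∈ range 3, ε ^ ((k : ℤ) - 3) * (-1 : ℝ) ^ k / (k.factorial * (3 - k : ℝ)))
      (nhdsWithin 0 (Ioi 0)) (nhds (-11 / 36)) := by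
  set q := fun x => (exp x - ∑ m ∈ range 4, x ^ m / m.factorial) / x ^ 3
  have hid : ∀ ε : ℝ, 0 < ε → exp (-ε) * (2 - ε + ε ^ 2) / (6 * ε ^ 3)
        - ∑ k ∈ range 3, ε ^ ((k : ℤ) - 3) * (-1 : ℝ) ^ k / (k.factorial * (3 - k : ℝ))
      = -11 / 36 + ε * (4 - ε) / 36 - (2 - ε + ε ^ 2) / 6 * q (-ε) := by
    intro ε hε
    norm_num [q, sum_range_succ, Nat.factorial, zpow_neg]
    field_simp
    ring
  have hq : Tendsto (fun ε => q (-ε)) (nhdsWithin 0 (Ioi 0)) (nhds 0) :=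
    (tendsto_exp_sub_sum_div_pow_nhdsNE_zero 3).comp
      (tendsto_nhdsWithin_of_tendsto_nhds_of_eventually_within _
        (by simpa using (continuous_neg.tendsto (0 : ℝ)).mono_left nhdsWithin_le_nhds)
        (eventually_nhdsWithin_of_forall fun ε (hε : 0 < ε) => neg_ne_zero.mpr hε.ne'))
  have hε : Tendsto (fun ε : ℝ => ε) (nhdsWithin 0 (Ioi 0)) (nhds 0) :=
    tendsto_nhdsWithin_of_tendsto_nhds tendsto_id
  have hlim := ((hε.mul (hε.const_sub 4)).div_const 36).const_add (-11 / 36) |>.sub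
    ((((hε.const_sub 2).add (hε.pow 2)).div_const 6).mul hq)
  refine tendsto_nhdsWithin_congr (fun ε hε => (hid ε hε).symm) ?_
  simpa using hlim

theorem stmt_9 :
    Tendsto (fun ε : ℝ =>
        (∫ x in Ioi ε, Real.exp (-x) / x ^ 4)
          - ∑ k ∈ Finset.range 3,
              ε ^ ((k : ℤ) - 3) * (-1 : ℝ) ^ k / (Nat.factorial k * (3 - k : ℝ))
          + Real.log ε / 6 * (-1))
      (nhdsWithin 0 (Ioi 0)) (nhds (-11 / 36 + Real.eulerMascheroniConstant / 6)) := by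
  have hJ := tendsto_setIntegral_Ioi_nhdsGT integrableOn_log_mul_exp_neg_Ioi
  rw [integral_log_mul_exp_neg_Ioi] at hJ
  have hlim := (tendsto_exp_neg_mul_div_sub_sum_nhdsGT_zero.add
    (tendsto_log_mul_exp_neg_sub_one_nhdsGT_zero.div_const 6)).sub (hJ.div_const 6)
  rw [show (-11 / 36 : ℝ) + 0 / 6 - -eulerMascheroniConstant / 6
    = -11 / 36 + eulerMascheroniConstant / 6 by ring] at hlim
  refine tendsto_nhdsWithin_congr (fun ε (hε : 0 < ε) => ?_) hlim
  rw [integral_exp_neg_div_pow_four_Ioi hε]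
  ring
end
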